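/- Let d ≥ 1 and let ρ be a symmetric non-degenerate probability measure on ℝ^d (ρ(H) < 1 for every affine hyperplane H). Then for every x ∈ ℝ^d with x ≠ 0 and every d×d symmetric positive definite matrix M, one has I(x, M) > ⟨M⁻¹x, x⟩ / 2. -/

import Mathlib

open MeasureTheory Filter Matrix Real

noncomputable section

/-- `T_n(x) = ∑ i, x_i ᵗx_i`. -/
def Tmat (d n : ℕ) (x : Fin n → Fin d → ℝ) : Matrix (Fin d) (Fin d) ℝ :=
  ∑ i, Matrix.vecMulVec (x i) (x i)

/-- `S_n(x) = x_1 + … + x_n`. -/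
def Svec (d n : ℕ) (x : Fin n → Fin d → ℝ) : Fin d → ℝ := ∑ i, x i

/-- the Hamiltonian `(1/2)⟨T_n⁻¹ S_n, S_n⟩`. -/
def Hfun (d n : ℕ) (x : Fin n → Fin d → ℝ) : ℝ :=
  (1 / 2) * dotProduct ((Tmat d n x)⁻¹.mulVec (Svec d n x)) (Svec d n x)

/-- normalization constant `Z_n`. -/
def Zconst (d : ℕ) (ρ : Measure (Fin d → ℝ)) (n : ℕ) : ℝ :=
  ∫ x : Fin n → Fin d → ℝ,
    Set.indicator {x | 0 < (Tmat d n x).det} (fun x => Real.exp (Hfun d n x)) x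
    ∂ Measure.pi fun _ => ρ

/-- the Curie-Weiss model of SOC `μ̃_{n,ρ}`. -/
def CW (d : ℕ) (ρ : Measure (Fin d → ℝ)) (n : ℕ) : Measure (Fin n → Fin d → ℝ) :=
  (Measure.pi fun _ => ρ).withDensity fun x =>
    Set.indicator {x | 0 < (Tmat d n x).det}
      (fun x => ENNReal.ofReal (Real.exp (Hfun d n x) / Zconst d ρ n)) x

/-- covariance matrix `Σ = ∫ z ᵗz dρ(z)`. -/
def covM (d : ℕ) (ρ : Measure (Fin d → ℝ)) : Matrix (Fin d) (Fin d) ℝ :=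
  Matrix.of fun i j => ∫ z, z i * z j ∂ρ

/-- `M₄(z) = ∑ (∫ yᵢyⱼyₖyₗ dρ) zᵢzⱼzₖzₗ`. -/
def M4 (d : ℕ) (ρ : Measure (Fin d → ℝ)) (z : Fin d → ℝ) : ℝ :=
  ∑ i : Fin d, ∑ j : Fin d, ∑ k : Fin d, ∑ l : Fin d,
    (∫ y, y i * y j * y k * y l ∂ρ) * (z i * z j * z k * z l)

/-- symmetric measure: invariant under `z ↦ -z`. -/
def SymMeas (d : ℕ) (ρ : Measure (Fin d → ℝ)) : Prop := ρ.map (fun z => -z) = ρ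

/-- condition `(*)` : some Gaussian exponential moment. -/
def CondStar (d : ℕ) (ρ : Measure (Fin d → ℝ)) : Prop :=
  ∃ v₀ > (0:ℝ), Integrable (fun z => Real.exp (v₀ * dotProduct z z)) ρ

/-- the ρ-measure of every vector hyperplane is `< 1/√e`. -/
def HypLt (d : ℕ) (ρ : Measure (Fin d → ℝ)) : Prop :=
  ∀ s : Fin d → ℝ, s ≠ 0 →
    ρ {z | dotProduct s z = 0} < ENNReal.ofReal (1 / Real.sqrt (Real.exp 1))

/-- non-degeneracy: the ρ-measure of every affine hyperplane is `< 1`. -/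
def NonDeg (d : ℕ) (ρ : Measure (Fin d → ℝ)) : Prop :=
  ∀ s : Fin d → ℝ, s ≠ 0 → ∀ c : ℝ, ρ {z | dotProduct s z = c} < 1

-- positive square root of a positive semi-definite matrix (junk value otherwise).
open scoped Classical in
def psqrt (d : ℕ) (M : Matrix (Fin d) (Fin d) ℝ) : Matrix (Fin d) (Fin d) ℝ :=
  if h : M.PosSemidef then
    (h.1.eigenvectorUnitary : Matrix (Fin d) (Fin d) ℝ) *
      diagonal ((↑) ∘ (Real.sqrt ·) ∘ h.1.eigenvalues) *
      (star (h.1.eigenvectorUnitary : Matrix (Fin d) (Fin d) ℝ))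
  else 0

/-- Euclidean norm on `ℝ^d`. -/
def vnorm (d : ℕ) (v : Fin d → ℝ) : ℝ := Real.sqrt (dotProduct v v)

/-- Frobenius norm on `d × d` matrices. -/
def mnorm (d : ℕ) (M : Matrix (Fin d) (Fin d) ℝ) : ℝ :=
  Real.sqrt (∑ i : Fin d, ∑ j : Fin d, (M i j) ^ 2)

/-- the log-Laplace transform `Λ` of `(Z, Z ᵗZ)`, with values in `(-∞, +∞]`. -/
def Lam (d : ℕ) (ρ : Measure (Fin d → ℝ)) (u : Fin d → ℝ)
    (A : Matrix (Fin d) (Fin d) ℝ) : EReal :=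
  ENNReal.log (∫⁻ z, ENNReal.ofReal
    (Real.exp (dotProduct u z + dotProduct (A.mulVec z) z)) ∂ρ)

/-- the Cramér transform `I` of `(Z, Z ᵗZ)`. -/
def CramerI (d : ℕ) (ρ : Measure (Fin d → ℝ)) (x : Fin d → ℝ)
    (M : Matrix (Fin d) (Fin d) ℝ) : EReal :=
  ⨆ p : (Fin d → ℝ) × {A : Matrix (Fin d) (Fin d) ℝ // A.IsSymm},
    ((dotProduct x p.1 + (M * (p.2 : Matrix (Fin d) (Fin d) ℝ)).trace : ℝ) : EReal)
      - Lam d ρ p.1 p.2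

end

/-! The witness is `u = M⁻¹x`, `A = -½ u uᵀ`, for which `⟨x,u⟩ + tr(MA) = ⟨M⁻¹x,x⟩/2` and
`Λ(u,A) = ln E[exp(T - T²/2)]` with `T = ⟨u,Z⟩`. Symmetry of the law of `T` turns this
expectation into `E[cosh T · exp(-T²/2)]`, and `cosh t < exp(t²/2)` for `t ≠ 0`; since `T ≠ 0`
with positive probability by non-degeneracy, `Λ(u,A) < 0`. -/

open NormedSpace in
lemma Real.cosh_lt_exp_half_sq {x : ℝ} (hx : x ≠ 0) : cosh x < exp (x ^ 2 / 2) := by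
  rw [cosh_eq_tsum, exp_eq_exp_ℝ, exp_eq_tsum ℝ]
  refine x.hasSum_cosh.summable.tsum_lt_tsum (i := 2) (fun n => ?_) ?_
    (expSeries_summable' (x ^ 2 / 2))
  · simp only [div_pow, pow_mul, smul_eq_mul, inv_mul_eq_div, div_div]
    gcongr
    norm_cast
    exact Nat.two_pow_mul_factorial_le_factorial_two_mul _
  · simp only [div_pow, pow_mul, smul_eq_mul, inv_mul_eq_div, div_div]
    have : (0 : ℝ) < (x ^ 2) ^ 2 := by positivity
    rw [div_lt_div_iff₀ (by positivity) (by positivity)]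
    norm_num [Nat.factorial]
    nlinarith

lemma Real.exp_sub_sq_half_add_exp_neg_sub_sq_half (t : ℝ) :
    exp (t - t ^ 2 / 2) + exp (-t - t ^ 2 / 2) = 2 * (cosh t * exp (-(t ^ 2 / 2))) := by
  rw [cosh_eq, sub_eq_add_neg, sub_eq_add_neg, exp_add, exp_add]
  ring

lemma Real.cosh_mul_exp_neg_sq_half_le_one (t : ℝ) : cosh t * exp (-(t ^ 2 / 2)) ≤ 1 := by
  rw [← le_div_iff₀ (exp_pos _), exp_neg, div_inv_eq_mul, one_mul]
  exact cosh_le_exp_half_sq t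

lemma Real.cosh_mul_exp_neg_sq_half_lt_one {t : ℝ} (ht : t ≠ 0) :
    cosh t * exp (-(t ^ 2 / 2)) < 1 := by
  rw [← lt_div_iff₀ (exp_pos _), exp_neg, div_inv_eq_mul, one_mul]
  exact cosh_lt_exp_half_sq ht

theorem lintegral_exp_sub_sq_half_lt_one (ν : Measure ℝ) [IsProbabilityMeasure ν]
    (hsym : ν.map Neg.neg = ν) (h0 : ν {0} < 1) :
    ∫⁻ t, ENNReal.ofReal (exp (t - t ^ 2 / 2)) ∂ν < 1 := by
  set f : ℝ → ENNReal := fun t => ENNReal.ofReal (exp (t - t ^ 2 / 2))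
  set g : ℝ → ENNReal := fun t => ENNReal.ofReal (cosh t * exp (-(t ^ 2 / 2)))
  have hf : Measurable f := by fun_prop
  have hf_neg : ∫⁻ t, f (-t) ∂ν = ∫⁻ t, f t ∂ν := by
    conv_rhs => rw [← hsym]
    rw [lintegral_map hf measurable_neg]
  have hfg : ∫⁻ t, f t ∂ν + ∫⁻ t, f t ∂ν = 2 * ∫⁻ t, g t ∂ν := by
    nth_rewrite 2 [← hf_neg]
    rw [← lintegral_add_left hf, ← lintegral_const_mul _ (by fun_prop)]
    refine lintegral_congr fun t => ?_
    simp only [f, g]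
    rw [← ENNReal.ofReal_add (exp_nonneg _) (exp_nonneg _), neg_sq,
      exp_sub_sq_half_add_exp_neg_sub_sq_half, ENNReal.ofReal_mul zero_le_two,
      ENNReal.ofReal_ofNat]
  have hg_lt : ∫⁻ t, g t ∂ν < ∫⁻ _, 1 ∂ν := by
    refine lintegral_strict_mono_of_ae_le_of_ae_lt_on (s := {0}ᶜ) measurable_const.aemeasurable
      ?_ (ae_of_all _ fun t => ?_) ?_ (ae_of_all _ fun t ht => ?_)
    · exact ne_top_of_le_ne_top (by simp) (lintegral_mono fun t =>
        ENNReal.ofReal_le_one.2 (cosh_mul_exp_neg_sq_half_le_one t))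
    · exact ENNReal.ofReal_le_one.2 (cosh_mul_exp_neg_sq_half_le_one t)
    · rw [prob_compl_eq_one_sub (measurableSet_singleton 0)]
      exact (tsub_pos_iff_lt.2 h0).ne'
    · exact (ENNReal.ofReal_lt_one).2 (cosh_mul_exp_neg_sq_half_lt_one ht)
  rw [lintegral_const, measure_univ, one_mul] at hg_lt
  rw [← two_mul, ENNReal.mul_right_inj two_ne_zero ENNReal.ofNat_ne_top] at hfg
  exact hfg ▸ hg_lt

lemma Matrix.vecMulVec_self_mulVec_dotProduct {n R : Type*} [Fintype n] [CommSemiring R]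
    (u z : n → R) :
    vecMulVec u u *ᵥ z ⬝ᵥ z = (u ⬝ᵥ z) ^ 2 := by
  rw [vecMulVec_mulVec, op_smul_eq_smul, smul_dotProduct, smul_eq_mul, sq]

section

variable {d : ℕ} {ρ : Measure (Fin d → ℝ)}

lemma SymMeas.map_dotProduct (hsym : SymMeas d ρ) (u : Fin d → ℝ) :
    (ρ.map (u ⬝ᵥ ·)).map Neg.neg = ρ.map (u ⬝ᵥ ·) := by
  have hu : Measurable (u ⬝ᵥ · : (Fin d → ℝ) → ℝ) := by fun_prop
  rw [Measure.map_map measurable_neg hu]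
  conv_rhs => rw [← hsym, Measure.map_map hu measurable_neg]
  congr 1
  funext z
  simp [dotProduct_neg]

lemma NonDeg.map_dotProduct_singleton_zero_lt_one (hnd : NonDeg d ρ) {u : Fin d → ℝ}
    (hu : u ≠ 0) : ρ.map (u ⬝ᵥ ·) {0} < 1 := by
  rw [Measure.map_apply (by fun_prop) (measurableSet_singleton 0)]
  exact hnd u hu 0

lemma lam_neg_half_smul_vecMulVec_self (u : Fin d → ℝ) :
    Lam d ρ u ((-(1 / 2) : ℝ) • vecMulVec u u) =
      ENNReal.log (∫⁻ t, ENNReal.ofReal (exp (t - t ^ 2 / 2)) ∂ρ.map (u ⬝ᵥ ·)) := by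
  rw [Lam, lintegral_map (by fun_prop) (by fun_prop)]
  congr 2
  funext z
  rw [smul_mulVec, smul_dotProduct, vecMulVec_self_mulVec_dotProduct, smul_eq_mul]
  ring_nf

lemma lam_neg_half_smul_vecMulVec_self_lt_zero [IsProbabilityMeasure ρ] (hsym : SymMeas d ρ)
    (hnd : NonDeg d ρ) {u : Fin d → ℝ} (hu : u ≠ 0) :
    Lam d ρ u ((-(1 / 2) : ℝ) • vecMulVec u u) < 0 := by
  have : IsProbabilityMeasure (ρ.map (u ⬝ᵥ ·)) := Measure.isProbabilityMeasure_map (by fun_prop)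
  rw [lam_neg_half_smul_vecMulVec_self, ENNReal.log_lt_zero_iff]
  exact lintegral_exp_sub_sq_half_lt_one _ (hsym.map_dotProduct u)
    (hnd.map_dotProduct_singleton_zero_lt_one hu)

lemma le_cramerI (x u : Fin d → ℝ) (M : Matrix (Fin d) (Fin d) ℝ) {A : Matrix (Fin d) (Fin d) ℝ}
    (hA : A.IsSymm) :
    ((x ⬝ᵥ u + (M * A).trace : ℝ) : EReal) - Lam d ρ u A ≤ CramerI d ρ x M :=
  le_iSup (fun p : (Fin d → ℝ) × {A : Matrix (Fin d) (Fin d) ℝ // A.IsSymm} =>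
    ((x ⬝ᵥ p.1 + (M * (p.2 : Matrix (Fin d) (Fin d) ℝ)).trace : ℝ) : EReal) - Lam d ρ p.1 p.2)
    ⟨u, A, hA⟩

end

theorem cramerI_gt_general
    (d : ℕ) (ρ : Measure (Fin d → ℝ)) [IsProbabilityMeasure ρ]
    (hsym : SymMeas d ρ) (hnd : NonDeg d ρ)
    (x : Fin d → ℝ) (hx : x ≠ 0) (M : Matrix (Fin d) (Fin d) ℝ) (hM : M.PosDef) :
    ((dotProduct (M⁻¹.mulVec x) x / 2 : ℝ) : EReal) < CramerI d ρ x M := by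
  set u := M⁻¹ *ᵥ x
  have hMu : M *ᵥ u = x := by
    rw [mulVec_mulVec, mul_nonsing_inv _ hM.det_pos.ne'.isUnit, one_mulVec]
  have hu : u ≠ 0 := fun h => hx (by rw [← hMu, h, mulVec_zero])
  set A : Matrix (Fin d) (Fin d) ℝ := (-(1 / 2) : ℝ) • vecMulVec u u
  have hA : A.IsSymm := IsSymm.smul (transpose_vecMulVec u u) _
  have hval : x ⬝ᵥ u + (M * A).trace = u ⬝ᵥ x / 2 := by
    rw [Matrix.mul_smul, trace_smul, mul_vecMulVec, trace_vecMulVec, hMu, dotProduct_comm,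
      smul_eq_mul]
    ring
  have hΛ : Lam d ρ u A < 0 := lam_neg_half_smul_vecMulVec_self_lt_zero hsym hnd hu
  calc ((u ⬝ᵥ x / 2 : ℝ) : EReal)
      < ((u ⬝ᵥ x / 2 : ℝ) : EReal) - Lam d ρ u A := by
        simpa using EReal.sub_lt_sub_of_le_of_gt le_rfl hΛ (EReal.coe_ne_top _)
          (EReal.coe_ne_bot _)
    _ = ((x ⬝ᵥ u + (M * A).trace : ℝ) : EReal) - Lam d ρ u A := by rw [hval]
    _ ≤ CramerI d ρ x M := le_cramerI x u M hA

/-- for `x ≠ 0` and `M` positive definite, `I(x,M) > ⟨M⁻¹x,x⟩/2`. -/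
theorem cramerI_gt
    (d : ℕ) (hd : 1 ≤ d) (ρ : Measure (Fin d → ℝ)) [IsProbabilityMeasure ρ]
    (hsym : SymMeas d ρ) (hnd : NonDeg d ρ)
    (x : Fin d → ℝ) (hx : x ≠ 0) (M : Matrix (Fin d) (Fin d) ℝ) (hM : M.PosDef) :
    ((dotProduct (M⁻¹.mulVec x) x / 2 : ℝ) : EReal) < CramerI d ρ x M :=
  cramerI_gt_general d ρ hsym hnd x hx M hM
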